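/- arXiv:0912.1929 — 6 statements merged into one kernel-verified Lean document; each statement's English description precedes it below -/
import Mathlib

section
/- For integers d ≥ 1, k with 1 ≤ k ≤ d-1, and any nonnegative integer i, write r_i = d·{i/d} (the remainder of i mod d). Then for the power series coefficient bound: if i = d·n_d + Σ_{j=1}^k j·n_j with all n_j, n_d ≥ 0, then Σ_{j=1}^k n_j + n_d ≥ ⌊i/d⌋ + ⌈r_i/k⌉. -/
theorem Finset.sum_mul_le_mul_sum_of_le {s : Finset ℕ} {k : ℕ} (n : ℕ → ℕ)
    (hs : ∀ j ∈ s, j ≤ k) : ∑ j ∈ s, j * n j ≤ k * ∑ j ∈ s, n j := by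
  rw [Finset.mul_sum]
  exact Finset.sum_le_sum fun j hj => Nat.mul_le_mul_right _ (hs j hj)

-- `i % d + k * (i / d) = i - (d - k) * (i / d)`, and `i / d ≥ a`.
theorem Nat.mod_add_mul_div_le {d k i a b : ℕ} (hkd : k ≤ d) (hle : i ≤ d * a + k * b)
    (hge : d * a ≤ i) : i % d + k * (i / d) ≤ k * (a + b) := by
  rcases Nat.eq_zero_or_pos d with rfl | hd
  · simp_all
  have ha : a ≤ i / d := (Nat.le_div_iff_mul_le hd).mpr (by linarith)
  have hdiv := Nat.div_add_mod i d
  obtain ⟨e, rfl⟩ := Nat.exists_eq_add_of_le hkd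
  nlinarith [Nat.mul_le_mul_left e ha]

theorem Int.ceil_natCast_div_le {r k : ℕ} {m : ℤ} (hk : 0 < k) (h : (r : ℤ) ≤ k * m) :
    ⌈(r : ℚ) / k⌉ ≤ m := by
  rw [Int.ceil_le, div_le_iff₀ (by exact_mod_cast hk)]
  exact_mod_cast (mul_comm (k : ℤ) m ▸ h)

theorem keyCoefficientEstimate_general (d k i nd : ℕ) (n : ℕ → ℕ)
    (hk1 : 1 ≤ k) (hk2 : k ≤ d - 1)
    (hi : i = d * nd + ∑ j ∈ Finset.Icc 1 k, j * n j) :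
    ((i / d : ℕ) : ℤ) + ⌈((i % d : ℕ) : ℚ) / k⌉
      ≤ ((∑ j ∈ Finset.Icc 1 k, n j : ℕ) : ℤ) + (nd : ℤ) := by
  set N := ∑ j ∈ Finset.Icc 1 k, n j
  have hS : ∑ j ∈ Finset.Icc 1 k, j * n j ≤ k * N :=
    Finset.sum_mul_le_mul_sum_of_le n fun j hj => (Finset.mem_Icc.mp hj).2
  have hmod : ((i % d : ℕ) : ℤ) + k * (i / d : ℕ) ≤ k * (nd + N) := by
    exact_mod_cast Nat.mod_add_mul_div_le (by omega) (by omega) (by omega)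
  have hceil : ⌈((i % d : ℕ) : ℚ) / k⌉ ≤ (N : ℤ) + nd - (i / d : ℕ) :=
    Int.ceil_natCast_div_le hk1 (by linarith)
  linarith

/-- Any representation of `i` as `d*n_d + Σ_{j=1}^k j*n_j` with nonnegative parts uses at
least `⌊i/d⌋ + ⌈(d·{i/d})/k⌉` parts, where `d·{i/d} = i % d`. -/
theorem keyCoefficientEstimate (d k i nd : ℕ) (n : ℕ → ℕ)
    (hd : 1 ≤ d) (hk1 : 1 ≤ k) (hk2 : k ≤ d - 1)
    (hi : i = d * nd + ∑ j ∈ Finset.Icc 1 k, j * n j) :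
    ((i / d : ℕ) : ℤ) + ⌈((i % d : ℕ) : ℚ) / k⌉
      ≤ ((∑ j ∈ Finset.Icc 1 k, n j : ℕ) : ℤ) + (nd : ℤ) :=
  keyCoefficientEstimate_general d k i nd n hk1 hk2 hi
end

section
/- Let d ≥ 2, 1 ≤ k ≤ d-1 be integers. For nonnegative integers a, b with r_a = a mod d and r_b = b mod d, one has ⌈((d-k)·[r_b > r_a])/k + {r_a/k} - {r_b/k}⌉ ≥ [{r_b/k} ≤ {r_m/k} < {r_a/k}] for any fixed nonnegative integer m with r_m = m mod d, where [P] denotes the indicator of a proposition P. -/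
/-- For remainders `r_a = a % d`, `r_b = b % d`, `r_m = m % d`:
`⌈((d-k)·[r_b > r_a])/k + {r_a/k} - {r_b/k}⌉ ≥ [{r_b/k} ≤ {r_m/k} < {r_a/k}]`. -/
theorem ceilIndicatorIneq (d k a b m : ℕ) (hd : 2 ≤ d) (hk1 : 1 ≤ k) (hk2 : k ≤ d - 1) :
    (if Int.fract (((b % d : ℕ) : ℚ) / k) ≤ Int.fract (((m % d : ℕ) : ℚ) / k) ∧
        Int.fract (((m % d : ℕ) : ℚ) / k) < Int.fract (((a % d : ℕ) : ℚ) / k)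
      then (1 : ℤ) else 0)
    ≤ ⌈(((d - k : ℕ) : ℚ) * (if a % d < b % d then 1 else 0)) / k
        + Int.fract (((a % d : ℕ) : ℚ) / k) - Int.fract (((b % d : ℕ) : ℚ) / k)⌉ := by
  have hkQ : (0:ℚ) < (k:ℚ) := by exact_mod_cast hk1
  have hterm : 0 ≤ (((d - k : ℕ) : ℚ) * (if a % d < b % d then (1:ℚ) else 0)) / k := by
    apply div_nonneg _ hkQ.le
    apply mul_nonneg (Nat.cast_nonneg _)
    split <;> norm_num
  have hfa0 : 0 ≤ Int.fract (((a % d : ℕ) : ℚ) / k) := Int.fract_nonneg _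
  have hfb1 : Int.fract (((b % d : ℕ) : ℚ) / k) < 1 := Int.fract_lt_one _
  split
  · rename_i h
    have hlt : Int.fract (((b % d : ℕ) : ℚ) / k) < Int.fract (((a % d : ℕ) : ℚ) / k) :=
      lt_of_le_of_lt h.1 h.2
    have : ((0:ℤ):ℚ) < (((d - k : ℕ) : ℚ) * (if a % d < b % d then 1 else 0)) / k
        + Int.fract (((a % d : ℕ) : ℚ) / k) - Int.fract (((b % d : ℕ) : ℚ) / k) := by
      push_cast
      linarith
    have := Int.lt_ceil.mpr this
    omega
  · have : ((-1:ℤ):ℚ) < (((d - k : ℕ) : ℚ) * (if a % d < b % d then 1 else 0)) / k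
        + Int.fract (((a % d : ℕ) : ℚ) / k) - Int.fract (((b % d : ℕ) : ℚ) / k) := by
      push_cast
      linarith
    have := Int.lt_ceil.mpr this
    omega
end

section
/- Let A be an (nb)×(nb) cyclic block matrix as above (only nonzero blocks G^(1),...,G^(b) placed cyclically). If F is a principal square submatrix of A of size bm whose intersection with some block G^(i) is not an m × m matrix, then det(F) = 0. -/
/-!
Expand the determinant over permutations `σ` of `S`. The term of `σ` can be nonzero only if
every `x ∈ S` lies in the block row right after that of `σ x`; then `σ` maps the part of `S` over
block `i + 1` injectively into the part over block `i`. Going once around the cycle, these part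
sizes can only decrease, so they are all equal, hence all equal to `m` because `|S| = b m`.
-/

open Finset

namespace Fin

open Fin.NatCast

variable {b : ℕ} [NeZero b]

theorem apply_add_one_eq_of_forall_le {M : Type*} [AddCommMonoid M] [PartialOrder M]
    [IsOrderedCancelAddMonoid M] {f : Fin b → M} (h : ∀ i, f (i + 1) ≤ f i) (i : Fin b) :
    f (i + 1) = f i := by
  have hsum : ∑ j, f (j + 1) = ∑ j, f j := Fintype.sum_equiv (Equiv.addRight 1) _ _ fun _ => rfl
  exact (sum_eq_sum_iff_of_le fun j _ => h j).1 hsum i (mem_univ i)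

theorem apply_eq_apply_zero_of_forall_add_one {α : Type*} {f : Fin b → α}
    (h : ∀ i, f (i + 1) = f i) (i : Fin b) : f i = f 0 := by
  have hnat : ∀ k : ℕ, f k = f 0 := by
    intro k
    induction k with
    | zero => simp
    | succ k ih => rw [Nat.cast_succ, h, ih]
  simpa using hnat i

end Fin

theorem Matrix.det_eq_zero_of_forall_exists_apply_eq_zero {n R : Type*} [Fintype n]
    [DecidableEq n] [CommRing R] {M : Matrix n n R} (h : ∀ σ : Equiv.Perm n, ∃ i, M (σ i) i = 0) :
    M.det = 0 := by
  rw [Matrix.det_apply]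
  refine sum_eq_zero fun σ _ => ?_
  obtain ⟨i, hi⟩ := h σ
  rw [prod_eq_zero (f := fun j => M (σ j) j) (mem_univ i) hi, smul_zero]

section CyclicFibers

variable {ι : Type*} [Fintype ι] {b : ℕ} [NeZero b] {p : ι → Fin b} (σ : Equiv.Perm ι)

theorem card_fiber_add_one_le_of_perm (hσ : ∀ x, p x = p (σ x) + 1) (i : Fin b) :
    #{x | p x = i + 1} ≤ #{x | p x = i} := by
  refine card_le_card_of_injOn σ (fun x hx => ?_) σ.injective.injOn
  simp only [coe_filter, mem_univ, true_and, Set.mem_ofPred_eq] at hx ⊢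
  exact add_right_cancel (hσ x ▸ hx)

theorem card_fiber_eq_of_perm {m : ℕ} (hσ : ∀ x, p x = p (σ x) + 1)
    (hcard : Fintype.card ι = b * m) (i : Fin b) : #{x | p x = i} = m := by
  have hconst : ∀ j : Fin b, #{x | p x = j} = #{x | p x = 0} :=
    Fin.apply_eq_apply_zero_of_forall_add_one (f := fun j => #{x | p x = j})
      (Fin.apply_add_one_eq_of_forall_le (f := fun j => #{x | p x = j})
        (card_fiber_add_one_le_of_perm σ hσ))
  have hsum : Fintype.card ι = b * #{x | p x = 0} := by
    rw [← card_univ, card_eq_sum_card_fiberwise (fun x _ => mem_univ (p x)),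
      sum_congr rfl fun j _ => hconst j, sum_const, card_univ, Fintype.card_fin, smul_eq_mul]
  rw [hconst i]
  exact Nat.eq_of_mul_eq_mul_left (Nat.pos_of_neZero b) (hsum.symm.trans hcard)

end CyclicFibers

theorem Finset.card_filter_univ_subtype {α : Type*} (S : Finset α) (q : α → Prop)
    [DecidablePred q] : #{x : S | q x.1} = #(S.filter q) := by
  rw [univ_eq_attach, filter_attach, card_map, card_attach]

/-- If a principal `(bm)×(bm)` submatrix of the cyclic block matrix `A` meets some block
`G^(i)` in a submatrix which is not `m × m`, then its determinant vanishes. -/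
theorem cyclicBlockPrincipalMinorVanishes (R : Type*) [CommRing R] (b n m : ℕ)
    [NeZero b] (G : Fin b → Matrix (Fin n) (Fin n) R)
    (A : Matrix (Fin b × Fin n) (Fin b × Fin n) R)
    (hA : ∀ x y : Fin b × Fin n, A x y = if y.1 = x.1 + 1 then G x.1 x.2 y.2 else 0)
    (S : Finset (Fin b × Fin n)) (hS : S.card = b * m)
    (hbad : ∃ i : Fin b, (S.filter (fun x => x.1 = i)).card ≠ m ∨
      (S.filter (fun x => x.1 = i + 1)).card ≠ m) :
    (A.submatrix (fun x : {a // a ∈ S} => (x : Fin b × Fin n))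
        (fun x : {a // a ∈ S} => (x : Fin b × Fin n))).det = 0 := by
  classical
  refine Matrix.det_eq_zero_of_forall_exists_apply_eq_zero fun σ => ?_
  by_contra! hσ
  have hshift : ∀ x : S, x.1.1 = (σ x).1.1 + 1 := fun x => by
    by_contra hne
    exact hσ x (by simp [hA, hne])
  have hfiber : ∀ i, (S.filter (fun x => x.1 = i)).card = m := fun i => by
    rw [← card_filter_univ_subtype]
    exact card_fiber_eq_of_perm σ hshift (by simpa using hS) i
  obtain ⟨i, hi | hi⟩ := hbad
  · exact hi (hfiber i)
  · exact hi (hfiber (i + 1))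
end

section
/- Let R ⊆ ℕ × {1,...,b} be a finite set of cardinality bm, and let g : ℕ → ℤ be a function such that g(l) ≥ g(m) for all l ≥ m and g(l) ≤ g(m-1) for all l ≤ m-1 (g nondecreasing in the relevant range). Then Σ_{(l,w) ∈ R} g(l) ≥ b·Σ_{l=0}^{m-1} g(l) + N·(g(m) - g(m-1)), where N = #{(l,w) ∈ R : l ≥ m} = #{(l,w) ∈ (ℕ_{<m} × {1,...,b}) \ R}. -/
/-!
The grid `range m ×ˢ Icc 1 b` has `b * m` elements, as many as `R`, so `R` has as many
elements outside the grid (exactly those with first coordinate `≥ m`) as the grid has elements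
outside `R`. Exchanging each missing grid point, worth at most `g (m - 1)`, for a point of `R`
beyond the grid, worth at least `g m`, gains at least `g m - g (m - 1)` each time.
-/

open Finset

namespace Finset

theorem sum_add_card_sdiff_nsmul_le_sum {α M : Type*} [DecidableEq α] [AddCommGroup M]
    [LinearOrder M] [IsOrderedAddMonoid M] {s t : Finset α} {f : α → M} {a c : M}
    (hst : #s = #t) (ha : ∀ x ∈ s \ t, a ≤ f x) (hc : ∀ x ∈ t \ s, f x ≤ c) :
    ∑ x ∈ t, f x + #(s \ t) • (a - c) ≤ ∑ x ∈ s, f x := by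
  have hlow : #(s \ t) • a ≤ ∑ x ∈ s \ t, f x := card_nsmul_le_sum _ _ _ ha
  have hup : ∑ x ∈ t \ s, f x ≤ #(s \ t) • c := by
    rw [card_sdiff_comm hst]
    exact sum_le_card_nsmul _ _ _ hc
  rw [← sum_inter_add_sum_sdiff s t, ← sum_inter_add_sum_sdiff t s, inter_comm, nsmul_sub]
  calc ∑ x ∈ s ∩ t, f x + ∑ x ∈ t \ s, f x + (#(s \ t) • a - #(s \ t) • c)
      ≤ ∑ x ∈ s ∩ t, f x + #(s \ t) • c + (#(s \ t) • a - #(s \ t) • c) := by gcongr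
    _ = ∑ x ∈ s ∩ t, f x + #(s \ t) • a := by abel
    _ ≤ ∑ x ∈ s ∩ t, f x + ∑ x ∈ s \ t, f x := by gcongr

theorem filter_le_fst_eq_sdiff_range_product {β : Type*} [DecidableEq β] {R : Finset (ℕ × β)}
    {T : Finset β} (hR : ∀ x ∈ R, x.2 ∈ T) (m : ℕ) :
    R.filter (fun x => m ≤ x.1) = R \ range m ×ˢ T := by
  ext x
  simp only [mem_filter, mem_sdiff, mem_product, mem_range, not_and]
  exact and_congr_right fun hx =>
    ⟨fun h h' => absurd h' (not_lt.2 h), fun h => not_lt.1 fun h' => h h' (hR x hx)⟩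

end Finset

theorem countingRearrangement_general (b m : ℕ)
    (R : Finset (ℕ × ℕ)) (hR2 : ∀ x ∈ R, x.2 ∈ Finset.Icc 1 b)
    (hcard : R.card = b * m) (g : ℕ → ℤ)
    (hg1 : ∀ l, m ≤ l → g m ≤ g l) (hg2 : ∀ l, l ≤ m - 1 → g l ≤ g (m - 1)) :
    (R.filter (fun x => m ≤ x.1)).card
        = ((Finset.range m ×ˢ Finset.Icc 1 b) \ R).card ∧
    (b : ℤ) * (∑ l ∈ Finset.range m, g l)
        + ((R.filter (fun x => m ≤ x.1)).card : ℤ) * (g m - g (m - 1))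
      ≤ ∑ x ∈ R, g x.1 := by
  set S := range m ×ˢ Icc 1 b
  have hcardS : #R = #S := by simp [S, hcard, mul_comm]
  have hsumS : ∑ x ∈ S, g x.1 = b * ∑ l ∈ range m, g l := by
    simp [S, sum_product_right, mul_comm]
  have hfilter := filter_le_fst_eq_sdiff_range_product hR2 m
  rw [hfilter, card_sdiff_comm hcardS, ← hsumS, ← card_sdiff_comm hcardS, ← nsmul_eq_mul]
  refine ⟨rfl, sum_add_card_sdiff_nsmul_le_sum hcardS (fun x hx => ?_) (fun x hx => ?_)⟩
  · have hx' : x ∈ R.filter (fun x => m ≤ x.1) := hfilter ▸ hx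
    exact hg1 _ (mem_filter.mp hx').2
  · have hlt : x.1 < m := mem_range.mp (mem_product.mp (mem_sdiff.mp hx).1).1
    exact hg2 _ (Nat.le_sub_one_of_lt hlt)

/-- Counting/rearrangement lemma: for `R ⊆ ℕ × {1,…,b}` of cardinality `bm` and `g`
nondecreasing across the cut at `m`, the sum over `R` is bounded below. -/
theorem countingRearrangement (b m : ℕ) (hb : 1 ≤ b) (hm : 1 ≤ m)
    (R : Finset (ℕ × ℕ)) (hR2 : ∀ x ∈ R, x.2 ∈ Finset.Icc 1 b)
    (hcard : R.card = b * m) (g : ℕ → ℤ)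
    (hg1 : ∀ l, m ≤ l → g m ≤ g l) (hg2 : ∀ l, l ≤ m - 1 → g l ≤ g (m - 1)) :
    (R.filter (fun x => m ≤ x.1)).card
        = ((Finset.range m ×ˢ Finset.Icc 1 b) \ R).card ∧
    (b : ℤ) * (∑ l ∈ Finset.range m, g l)
        + ((R.filter (fun x => m ≤ x.1)).card : ℤ) * (g m - g (m - 1))
      ≤ ∑ x ∈ R, g x.1 :=
  countingRearrangement_general b m R hR2 hcard g hg1 hg2
end

section
/- Let d ≥ 2, 1 ≤ k ≤ d-1, and let m, r_m be as above. Then Σ_{a=0}^{r_m} (⌊r_{a,i}/k⌋ - ⌊a/k⌋ + [{r_{a,i}/k} > {r_m/k}] - [{a/k} > {r_m/k}]) ≥ Σ_{r_{a,i} ∈ A_{i3}} ⌈(r_{a,i} - r_m)/k⌉, where [P] is the indicator of P, r_{a,i} = (pa + u_{b-i}) mod d, and A_{i3} = {r_{a,i} > r_m : 0 ≤ a ≤ r_m}, assuming a ↦ r_{a,i} is a bijection on residues mod d. -/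
/-! With `F x = ⌈(x - r_m)/k⌉`, the identity `⌊x/k⌋ + [{x/k} > {r_m/k}] = F x + ⌊r_m/k⌋` turns
the `a`-th summand on the right into `F (r_a) - F a`. Since `F ≤ 0` on `[0, r_m]` and `a ↦ r_a` is
injective, the residues `r_a` that stay in `[0, r_m]` contribute at least `∑_{x ≤ r_m} F x`, so the
right side is at least the sum of `F` over the residues that leave `[0, r_m]`, which is the left
side. -/

open Finset

theorem Int.ceil_sub_eq_floor_sub_floor_add_ite {R : Type*} [Ring R] [LinearOrder R]
    [IsStrictOrderedRing R] [FloorRing R] (a b : R) :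
    ⌈a - b⌉ = ⌊a⌋ - ⌊b⌋ + if Int.fract b < Int.fract a then 1 else 0 := by
  have hsplit : a - b = (Int.fract a - Int.fract b) + ((⌊a⌋ - ⌊b⌋ : ℤ) : R) := by
    unfold Int.fract; push_cast; abel
  rw [hsplit, Int.ceil_add_intCast, add_comm]
  congr 1
  split_ifs with h
  · refine Int.ceil_eq_iff.2 ⟨by simpa using h, ?_⟩
    calc Int.fract a - Int.fract b ≤ Int.fract a := sub_le_self _ (Int.fract_nonneg b)
      _ ≤ ((1 : ℤ) : R) := by simpa using (Int.fract_lt_one a).le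
  · refine Int.ceil_eq_iff.2 ⟨?_, mod_cast sub_nonpos.2 (not_lt.1 h)⟩
    calc ((0 : ℤ) : R) - 1 < -Int.fract b := by simpa using Int.fract_lt_one b
      _ ≤ Int.fract a - Int.fract b := by simp

theorem floor_div_add_ite_fract_lt {K : Type*} [Field K] [LinearOrder K]
    [IsStrictOrderedRing K] [FloorRing K] (x r k : K) :
    (⌊x / k⌋ : K) + (if Int.fract (r / k) < Int.fract (x / k) then 1 else 0)
      = ⌈(x - r) / k⌉ + ⌊r / k⌋ := by
  rw [sub_div, Int.ceil_sub_eq_floor_sub_floor_add_ite]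
  push_cast
  ring

theorem Finset.sum_filter_comp_notMem_le_sum_sub {ι M : Type*} [DecidableEq ι]
    [AddCommGroup M] [PartialOrder M] [IsOrderedAddMonoid M] {s : Finset ι} {f : ι → ι}
    {F : ι → M} (hf : Set.InjOn f s) (hF : ∀ x ∈ s, F x ≤ 0) :
    ∑ a ∈ s.filter (fun a => f a ∉ s), F (f a) ≤ ∑ a ∈ s, (F (f a) - F a) := by
  have himage : (s.filter (fun a => f a ∈ s)).image f ⊆ s := by
    intro x hx
    obtain ⟨a, ha, rfl⟩ := mem_image.1 hx
    exact (mem_filter.1 ha).2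
  have hstay : ∑ x ∈ s, F x ≤ ∑ a ∈ s.filter (fun a => f a ∈ s), F (f a) := by
    rw [← sum_image (hf.mono (coe_subset.2 (filter_subset _ s)))]
    exact sum_le_sum_of_subset_of_nonpos' himage fun x hx _ => hF x hx
  rw [sum_sub_distrib, ← sum_filter_add_sum_filter_not s (fun a => f a ∈ s), add_sub_right_comm]
  exact le_add_of_nonneg_left (sub_nonneg.2 hstay)

theorem Nat.mod_eq_self_of_le_mod {a m d : ℕ} (h : a ≤ m % d) : a % d = a := by
  rcases d.eq_zero_or_pos with rfl | hd
  · exact Nat.mod_zero a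
  · exact Nat.mod_eq_of_lt (h.trans_lt (Nat.mod_lt m hd))

theorem injOn_affine_mod_of_injective {p d u' : ℕ}
    (h : Function.Injective (fun a : ZMod d => (p : ZMod d) * a + (u' : ZMod d))) (m : ℕ) :
    Set.InjOn (fun a => (p * a + u') % d) (range (m % d + 1)) := by
  intro a ha b hb hab
  have hcast : (p : ZMod d) * a + u' = p * b + u' := by
    simpa only [ZMod.natCast_mod, Nat.cast_add, Nat.cast_mul] using
      congrArg (fun n : ℕ => (n : ZMod d)) hab
  have hmod := (ZMod.natCast_eq_natCast_iff' a b d).1 (h hcast)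
  rwa [Nat.mod_eq_self_of_le_mod (Nat.lt_succ_iff.1 (mem_range.1 ha)),
    Nat.mod_eq_self_of_le_mod (Nat.lt_succ_iff.1 (mem_range.1 hb))] at hmod

theorem polygonRearrangement_general (p d k u' m : ℕ)
    (hbij : Function.Bijective (fun a : ZMod d => (p : ZMod d) * a + (u' : ZMod d))) :
    (∑ x ∈ ((Finset.range (m % d + 1)).filter
          (fun a => m % d < (p * a + u') % d)).image (fun a => (p * a + u') % d),
        (⌈((x : ℚ) - ((m % d : ℕ) : ℚ)) / k⌉ : ℚ))
      ≤ ∑ a ∈ Finset.range (m % d + 1),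
          ((⌊(((p * a + u') % d : ℕ) : ℚ) / k⌋ : ℚ) - (⌊(a : ℚ) / k⌋ : ℚ)
            + (if Int.fract (((m % d : ℕ) : ℚ) / k)
                  < Int.fract ((((p * a + u') % d : ℕ) : ℚ) / k) then 1 else 0)
            - (if Int.fract (((m % d : ℕ) : ℚ) / k)
                  < Int.fract ((a : ℚ) / k) then 1 else 0)) := by
  set r := m % d
  set f : ℕ → ℕ := fun a => (p * a + u') % d
  set F : ℕ → ℚ := fun x => ⌈((x : ℚ) - r) / k⌉
  have hf : Set.InjOn f (range (r + 1)) := injOn_affine_mod_of_injective hbij.injective m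
  have hsummand : ∀ a, F (f a) - F a = (⌊(f a : ℚ) / k⌋ : ℚ) - ⌊(a : ℚ) / k⌋
      + (if Int.fract ((r : ℚ) / k) < Int.fract ((f a : ℚ) / k) then 1 else 0)
      - (if Int.fract ((r : ℚ) / k) < Int.fract ((a : ℚ) / k) then 1 else 0) := fun a => by
    linarith [floor_div_add_ite_fract_lt (f a : ℚ) r k, floor_div_add_ite_fract_lt (a : ℚ) r k]
  have hF : ∀ x ∈ range (r + 1), F x ≤ 0 := fun x hx => by
    have hxr : (x : ℚ) ≤ r := by exact_mod_cast Nat.lt_succ_iff.1 (mem_range.1 hx)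
    have hq : ((x : ℚ) - r) / k ≤ 0 :=
      div_nonpos_of_nonpos_of_nonneg (sub_nonpos.2 hxr) (Nat.cast_nonneg k)
    exact Int.cast_nonpos.2 (Int.ceil_nonpos.2 hq)
  have hexit : (range (r + 1)).filter (fun a => r < f a)
      = (range (r + 1)).filter (fun a => f a ∉ range (r + 1)) :=
    filter_congr fun a _ => by simp
  rw [sum_image (hf.mono (coe_subset.2 (filter_subset _ _))), hexit]
  exact (sum_filter_comp_notMem_le_sum_sub hf hF).trans_eq (sum_congr rfl fun a _ => hsummand a)

/-- Rearrangement inequality from the comparison of arithmetic polygons: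
`Σ_{a=0}^{r_m} (⌊r_{a,i}/k⌋ - ⌊a/k⌋ + [{r_{a,i}/k}>{r_m/k}] - [{a/k}>{r_m/k}])
  ≥ Σ_{x ∈ A_{i3}} ⌈(x - r_m)/k⌉`, where `r_{a,i} = (pa+u') % d`. -/
theorem polygonRearrangement (p d k u' m : ℕ) (hd : 2 ≤ d) (hk1 : 1 ≤ k)
    (hk2 : k ≤ d - 1)
    (hbij : Function.Bijective (fun a : ZMod d => (p : ZMod d) * a + (u' : ZMod d))) :
    (∑ x ∈ ((Finset.range (m % d + 1)).filter
          (fun a => m % d < (p * a + u') % d)).image (fun a => (p * a + u') % d),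
        (⌈((x : ℚ) - ((m % d : ℕ) : ℚ)) / k⌉ : ℚ))
      ≤ ∑ a ∈ Finset.range (m % d + 1),
          ((⌊(((p * a + u') % d : ℕ) : ℚ) / k⌋ : ℚ) - (⌊(a : ℚ) / k⌋ : ℚ)
            + (if Int.fract (((m % d : ℕ) : ℚ) / k)
                  < Int.fract ((((p * a + u') % d : ℕ) : ℚ) / k) then 1 else 0)
            - (if Int.fract (((m % d : ℕ) : ℚ) / k)
                  < Int.fract ((a : ℚ) / k) then 1 else 0)) :=
  polygonRearrangement_general p d k u' m hbij
end

section
/- Let d ≥ 2, p prime with gcd(p,d) = 1, b ≥ 1, u with digits u_0,...,u_{b-1} ∈ {0,...,p-1}, and 1 ≤ k ≤ d-1. With ω_{Δ,u}(n) = (1/b)·Σ_{i=1}^b (⌈((p-1)n + u_{b-i})/d⌉ - δ^{(i)}(n)) where δ^{(i)}(n) = 1 iff pl ≡ n - u_{b-i} (mod d) for some 0 ≤ l < d{n/d}, and with ϖ_{d,[0,k],u}(a) defined as in the paper (involving floors ⌊(pa+u_{b-i})/d⌋, ⌊a/d⌋, ⌊r_{a,i}/k⌋, ⌊r_a/k⌋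 and indicator correction sums over j ≤ r_a and j ≤ r_{a-1}), the partial sums satisfy Σ_{a=0}^{m-1} ϖ_{d,[0,k],u}(a) ≥ Σ_{a=0}^{m-1} ω_{Δ,u}(a) for every m ≥ 0; i.e., the twisted arithmetic polygon p_{d,[0,k],u} of {d} ∪ [0,k] lies on or above the twisted arithmetic polygon p_{Δ,u} of [0,d]. -/
/-!
For a digit `u`, `σ j = (p j + u) mod d` permutes the residues mod `d`. Because
`⌈((p - 1)a + u)/d⌉ = ⌊(pa + u)/d⌋ - ⌊a/d⌋ + [a mod d < σ(a mod d)]`, the `u`-part of `ϖ(a) - ω(a)`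
is `D(r) + T(r) - T(r_{a-1})` with `r = a mod d`, where `D(r)` depends on `r` only and `T(s)` is the
indicator correction with threshold `s`. As `σ` is a permutation, `D` sums to zero over a period
and `T(d - 1) = 0`, so the partial sum up to `m` telescopes to `Σ_{r ≤ s} D(r) + T(s)` with
`s = r_{m-1}`. With `g(x) = ⌊x/k⌋ + [x mod k > s mod k] = ⌊(x + k - 1 - s mod k)/k⌋`, which is
monotone and satisfies `g(s + 1) = g(s) + 1`, this equals
`#{j ≤ s | j ∈ σ[0, j)} - #{j ≤ s | j < σ j} + Σ_{j ≤ s} (g(σ j) - g(j))`. The two counts differ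
by the number `N` of `j ≤ s` sent above `s`; `σ` moves `N` points out of `[0, s]` and `N` points in,
and each incoming point gains at least `1` in `g`, so the total is nonnegative.
-/

namespace TwistedArithmeticPolygon

/-- `r_{a-1}`, the remainder mod `d` of `a - 1` (computed in `ℤ`, so `r_{-1} = d-1`). -/
def rprev (d a : ℕ) : ℕ := (((a : ℤ) - 1) % (d : ℤ)).toNat

/-- The fractional part `{x/k}`. -/
noncomputable def frK (k x : ℕ) : ℚ := Int.fract ((x : ℚ) / k)

/-- Indicator `[{x/k} > {t/k}]`. -/
noncomputable def indGT (k x t : ℕ) : ℚ := if frK k t < frK k x then 1 else 0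

/-- `δ^{(i)}(n) = 1` iff `pl ≡ n - u_{b-i} (mod d)` for some `0 ≤ l < d{n/d}`. -/
def deltaIn (p d b : ℕ) (udig : ℕ → ℕ) (i n : ℕ) : ℚ :=
  if ∃ l ∈ Finset.range (n % d),
      (p * l : ℤ) % (d : ℤ) = ((n : ℤ) - (udig (b - i) : ℤ)) % (d : ℤ)
  then 1 else 0

/-- The slope `ω_{Δ,u}(n)` of the twisted arithmetic polygon of `Δ = [0,d]`. -/
noncomputable def omegaSlope (p d b : ℕ) (udig : ℕ → ℕ) (n : ℕ) : ℚ :=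
  (1 / (b : ℚ)) * ∑ i ∈ Finset.Icc 1 b,
    ((⌈(((p - 1) * n + udig (b - i) : ℕ) : ℚ) / d⌉ : ℚ) - deltaIn p d b udig i n)

/-- The slope `ϖ_{d,[0,k],u}(a)` of the twisted arithmetic polygon of `{d} ∪ [0,k]`. -/
noncomputable def varpiSlope (p d k b : ℕ) (udig : ℕ → ℕ) (a : ℕ) : ℚ :=
  (1 / (b : ℚ)) * ∑ i ∈ Finset.Icc 1 b,
      ((⌊((p * a + udig (b - i) : ℕ) : ℚ) / d⌋ : ℚ) - (⌊(a : ℚ) / d⌋ : ℚ)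
        + (⌊(((p * a + udig (b - i)) % d : ℕ) : ℚ) / k⌋ : ℚ)
        - (⌊((a % d : ℕ) : ℚ) / k⌋ : ℚ))
  + (1 / (b : ℚ)) * ∑ i ∈ Finset.Icc 1 b, ∑ j ∈ Finset.range (a % d + 1),
      (indGT k ((p * j + udig (b - i)) % d) (a % d) - indGT k (j % d) (a % d))
  - (1 / (b : ℚ)) * ∑ i ∈ Finset.Icc 1 b, ∑ j ∈ Finset.range (rprev d a + 1),
      (indGT k ((p * j + udig (b - i)) % d) (rprev d a) - indGT k (j % d) (rprev d a))

open Finset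

lemma sum_add_card_sdiff_le_sum {ι : Type*} [DecidableEq ι] {A B : Finset ι} (g : ι → ℕ)
    (c : ℕ) (hcard : #A = #B) (hB : ∀ x ∈ B \ A, g x ≤ c) (hA : ∀ x ∈ A \ B, c + 1 ≤ g x) :
    ∑ x ∈ B, g x + #(A \ B) ≤ ∑ x ∈ A, g x := by
  have hsdiff : #(B \ A) = #(A \ B) := by
    have := card_sdiff_add_card_inter A B
    have := card_sdiff_add_card_inter B A
    rw [inter_comm] at this
    omega
  have hBA : ∑ x ∈ B \ A, g x ≤ #(A \ B) * c := hsdiff ▸ sum_le_card_nsmul _ _ _ hB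
  have hAB : #(A \ B) * (c + 1) ≤ ∑ x ∈ A \ B, g x := card_nsmul_le_sum _ _ _ hA
  rw [← sum_inter_add_sum_sdiff A B, ← sum_inter_add_sum_sdiff B A, inter_comm B A]
  nlinarith

lemma card_filter_lt_apply (σ : ℕ → ℕ) (n : ℕ) (hσ : Set.InjOn σ (range n)) :
    #{j ∈ range n | j < σ j}
      = #{j ∈ range n | j ∈ (range j).image σ} + #((range n).image σ \ range n) := by
  set L := {j ∈ range n | j < σ j}
  have hL : Set.InjOn σ L := hσ.mono (by intro j; simp only [coe_filter, L]; grind)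
  have hin : L.image σ ∩ range n = {j ∈ range n | j ∈ (range j).image σ} := by
    ext j; simp only [L, mem_inter, mem_image, mem_filter, mem_range]; grind
  have hout : L.image σ \ range n = (range n).image σ \ range n := by
    ext j; simp only [L, mem_sdiff, mem_image, mem_filter, mem_range]; grind
  rw [← card_image_of_injOn hL, ← card_inter_add_card_sdiff _ (range n), hin, hout]

lemma div_add_ite_mod_lt (k t x : ℕ) (hk : 0 < k) :
    x / k + (if t % k < x % k then 1 else 0) = (x + (k - 1 - t % k)) / k := by
  have ht := Nat.mod_lt t hk
  have hx := Nat.mod_lt x hk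
  have hsplit : x + (k - 1 - t % k) = x % k + (k - 1 - t % k) + k * (x / k) := by
    have := Nat.div_add_mod x k; omega
  rw [hsplit, Nat.add_mul_div_left _ _ hk, add_comm]
  congr 1
  split_ifs with h
  · exact ((Nat.div_eq_iff hk).2 ⟨by omega, by omega⟩).symm
  · exact (Nat.div_eq_of_lt (by omega)).symm

lemma add_sub_mod_div_succ (k s : ℕ) (hk : 0 < k) :
    (s + 1 + (k - 1 - s % k)) / k = (s + (k - 1 - s % k)) / k + 1 := by
  have hmul : s + 1 + (k - 1 - s % k) = k * (s / k + 1) := by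
    have := Nat.div_add_mod s k
    have := Nat.mod_lt s hk
    rw [mul_add]; omega
  rw [hmul, Nat.mul_div_cancel_left _ hk, ← div_add_ite_mod_lt k s s hk, if_neg (lt_irrefl _),
    add_zero]

lemma ceil_natSub_div (x y d : ℕ) (hyx : y ≤ x) (hd : 0 < d) :
    ⌈((x - y : ℕ) : ℚ) / d⌉ = (x / d : ℕ) - (y / d : ℕ) + if y % d < x % d then 1 else 0 := by
  have hx : (d : ℚ) * (x / d : ℕ) + (x % d : ℕ) = x := by exact_mod_cast Nat.div_add_mod x d
  have hy : (d : ℚ) * (y / d : ℕ) + (y % d : ℕ) = y := by exact_mod_cast Nat.div_add_mod y d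
  have hrx : ((x % d : ℕ) : ℚ) < d := by exact_mod_cast Nat.mod_lt x hd
  have hry : ((y % d : ℕ) : ℚ) < d := by exact_mod_cast Nat.mod_lt y hd
  have hd' : (0 : ℚ) < d := by exact_mod_cast hd
  rw [Int.ceil_eq_iff, Nat.cast_sub hyx, lt_div_iff₀ hd', div_le_iff₀ hd']
  split_ifs with h
  · have : ((y % d : ℕ) : ℚ) + 1 ≤ (x % d : ℕ) := by exact_mod_cast h
    simp only [Int.cast_add, Int.cast_sub, Int.cast_natCast, Int.cast_one]
    constructor <;> linarith
  · have : ((x % d : ℕ) : ℚ) ≤ (y % d : ℕ) := by exact_mod_cast not_lt.1 h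
    simp only [Int.cast_add, Int.cast_sub, Int.cast_natCast, Int.cast_zero]
    constructor <;> linarith

lemma rprev_add_one (d a : ℕ) (hd : 0 < d) :
    rprev d a + 1 = if a % d = 0 then d else a % d := by
  have hmod : ((a : ℤ) - 1) % d = ((a % d + d - 1 : ℕ) : ℤ) % d := by
    have ha : (a : ℤ) - 1 ≡ (a % d : ℕ) - 1 [ZMOD d] :=
      (Int.natCast_modEq_iff.mpr (Nat.mod_modEq a d).symm).sub_right 1
    rw [ha.eq, show ((a % d + d - 1 : ℕ) : ℤ) = ((a % d : ℕ) : ℤ) - 1 + d by omega,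
      Int.add_emod_right]
  rw [rprev, hmod, ← Int.natCast_mod, Int.toNat_natCast]
  have := Nat.mod_lt a hd
  split_ifs with h
  · rw [h, Nat.zero_add, Nat.mod_eq_of_lt (by omega)]; omega
  · rw [show a % d + d - 1 = a % d - 1 + d by omega, Nat.add_mod_right,
      Nat.mod_eq_of_lt (by omega)]
    omega

lemma rprev_succ (d a : ℕ) : rprev d (a + 1) = a % d := by
  rw [rprev, Nat.cast_succ, add_sub_cancel_right, ← Int.natCast_mod, Int.toNat_natCast]

lemma rprev_lt (d a : ℕ) (hd : 0 < d) : rprev d a < d := by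
  have := rprev_add_one d a hd
  have := Nat.mod_lt a hd
  split_ifs at * <;> omega

section Permutation

variable (σ : ℕ → ℕ) (k : ℕ)

/- `D` and `T` of the header for an arbitrary `σ`; `σ = affineMod p d u` recovers the digit `u`. -/
def mainGap (r : ℕ) : ℚ :=
  (if r ∈ (range r).image σ then 1 else 0) - (if r < σ r then 1 else 0)
    + ((σ r / k : ℕ) : ℚ) - ((r / k : ℕ) : ℚ)

def correction (s : ℕ) : ℚ :=
  ∑ j ∈ range (s + 1), ((if s % k < σ j % k then 1 else 0) - (if s % k < j % k then 1 else 0))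

lemma sum_mainGap_add_correction_nonneg (hk : 0 < k) (s : ℕ) (hσ : Set.InjOn σ (range (s + 1))) :
    0 ≤ ∑ r ∈ range (s + 1), mainGap σ k r + correction σ k s := by
  set g : ℕ → ℕ := fun x => (x + (k - 1 - s % k)) / k
  have hg_mono : Monotone g := fun x y hxy => Nat.div_le_div_right (by omega)
  have hcount : #{j ∈ range (s + 1) | j < σ j} + ∑ j ∈ range (s + 1), g j
      ≤ #{j ∈ range (s + 1) | j ∈ (range j).image σ} + ∑ j ∈ range (s + 1), g (σ j) := by
    have := sum_add_card_sdiff_le_sum g (g s) (card_image_of_injOn hσ)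
      (fun x hx => hg_mono (by simpa [Nat.lt_succ_iff] using (mem_sdiff.1 hx).1))
      (fun x hx => (add_sub_mod_div_succ k s hk).symm.trans_le
        (hg_mono (by simpa [Nat.lt_succ_iff] using (mem_sdiff.1 hx).2)))
    rw [sum_image hσ] at this
    rw [card_filter_lt_apply σ _ hσ]
    omega
  have hsum : ∑ r ∈ range (s + 1), mainGap σ k r + correction σ k s
      = ((#{j ∈ range (s + 1) | j ∈ (range j).image σ} + ∑ j ∈ range (s + 1), g (σ j) : ℕ) : ℚ)
        - ((#{j ∈ range (s + 1) | j < σ j} + ∑ j ∈ range (s + 1), g j : ℕ) : ℚ) := by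
    rw [correction, ← sum_add_distrib]
    push_cast [g, ← div_add_ite_mod_lt k s _ hk, ← sum_boole]
    simp only [← sum_add_distrib, ← sum_sub_distrib]
    refine sum_congr rfl fun j _ => ?_
    rw [mainGap]; ring
  rw [hsum, sub_nonneg]
  exact_mod_cast hcount

lemma sum_range_mainGap_eq_zero {d : ℕ} (hσ : Set.BijOn σ (range d) (range d)) :
    ∑ r ∈ range d, mainGap σ k r = 0 := by
  have hcount := card_filter_lt_apply σ d hσ.injOn
  rw [sdiff_eq_empty_iff_subset.2 (image_subset_iff.2 fun j hj => hσ.mapsTo hj), card_empty,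
    add_zero] at hcount
  have hdiv : ∑ r ∈ range d, ((σ r / k : ℕ) : ℚ) = ∑ r ∈ range d, ((r / k : ℕ) : ℚ) :=
    sum_nbij σ (fun j hj => hσ.mapsTo hj) hσ.injOn hσ.surjOn fun _ _ => rfl
  simp only [mainGap, sum_add_distrib, sum_sub_distrib, sum_boole, hcount, hdiv]
  ring

lemma correction_pred_eq_zero {d : ℕ} (hd : 0 < d) (hσ : Set.BijOn σ (range d) (range d)) :
    correction σ k (d - 1) = 0 := by
  rw [correction, Nat.sub_add_cancel hd, sum_sub_distrib, sub_eq_zero]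
  exact sum_nbij σ (fun j hj => hσ.mapsTo hj) hσ.injOn hσ.surjOn fun _ _ => rfl

variable (d : ℕ)

def slopeDiff (a : ℕ) : ℚ :=
  mainGap σ k (a % d) + correction σ k (a % d) - correction σ k (rprev d a)

def potential (a : ℕ) : ℚ :=
  ∑ r ∈ range (rprev d a + 1), mainGap σ k r + correction σ k (rprev d a)

variable {d}

lemma potential_zero (hd : 0 < d) (hσ : Set.BijOn σ (range d) (range d)) :
    potential σ k d 0 = 0 := by
  have hrprev : rprev d 0 + 1 = d := by simpa using rprev_add_one d 0 hd
  rw [potential, hrprev, show rprev d 0 = d - 1 by omega, sum_range_mainGap_eq_zero σ k hσ,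
    correction_pred_eq_zero σ k hd hσ, add_zero]

lemma potential_succ_sub (hd : 0 < d) (hσ : Set.BijOn σ (range d) (range d)) (a : ℕ) :
    potential σ k d (a + 1) - potential σ k d a = slopeDiff σ k d a := by
  have hsum : ∑ r ∈ range (rprev d a + 1), mainGap σ k r = ∑ r ∈ range (a % d), mainGap σ k r := by
    rw [rprev_add_one d a hd]
    split_ifs with h
    · rw [h, sum_range_zero, sum_range_mainGap_eq_zero σ k hσ]
    · rfl
  rw [potential, potential, rprev_succ, hsum, sum_range_succ, slopeDiff]
  ring

lemma sum_range_slopeDiff_nonneg (hk : 0 < k) (hd : 0 < d)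
    (hσ : Set.BijOn σ (range d) (range d)) (m : ℕ) :
    0 ≤ ∑ a ∈ range m, slopeDiff σ k d a := by
  simp_rw [← potential_succ_sub σ k hd hσ]
  rw [sum_range_sub, potential_zero σ k hd hσ, sub_zero]
  exact sum_mainGap_add_correction_nonneg σ k hk _
    (hσ.injOn.mono (by simpa using rprev_lt d m hd))

end Permutation

def affineMod (p d u j : ℕ) : ℕ := (p * j + u) % d

lemma bijOn_affineMod {p d : ℕ} (hpd : Nat.Coprime p d) (hd : 0 < d) (u : ℕ) :
    Set.BijOn (affineMod p d u) (range d) (range d) := by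
  have hmaps : Set.MapsTo (affineMod p d u) (range d) (range d) := fun j _ =>
    mem_range.2 (Nat.mod_lt _ hd)
  refine ((finite_toSet _).injOn_iff_bijOn_of_mapsTo hmaps).1 fun j₁ h₁ j₂ h₂ h => ?_
  have hmul : p * j₁ ≡ p * j₂ [MOD d] := Nat.ModEq.add_right_cancel' u h
  exact (hmul.cancel_left_of_coprime (Nat.coprime_comm.1 hpd)).eq_of_lt_of_lt
    (mem_range.1 h₁) (mem_range.1 h₂)

lemma indGT_eq (k x t : ℕ) (hk : 0 < k) : indGT k x t = if t % k < x % k then 1 else 0 := by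
  simp only [indGT, frK, Int.fract_div_natCast_eq_div_natCast_mod,
    div_lt_div_iff_of_pos_right (Nat.cast_pos.2 hk : (0 : ℚ) < k), Nat.cast_lt]

lemma sum_indGT_sub_eq_correction (p d k u s : ℕ) (hk : 0 < k) (hs : s < d) :
    ∑ j ∈ range (s + 1), (indGT k ((p * j + u) % d) s - indGT k (j % d) s)
      = correction (affineMod p d u) k s :=
  sum_congr rfl fun j hj => by
    have hjd : j < d := by have := mem_range.1 hj; omega
    rw [indGT_eq _ _ _ hk, indGT_eq _ _ _ hk, Nat.mod_eq_of_lt hjd]; rfl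

lemma deltaIn_eq (p d b : ℕ) (udig : ℕ → ℕ) (i n : ℕ) :
    deltaIn p d b udig i n
      = if n % d ∈ (range (n % d)).image (affineMod p d (udig (b - i))) then 1 else 0 := by
  refine if_congr ?_ rfl rfl
  rw [mem_image]
  refine exists_congr fun l => and_congr_right fun _ => ?_
  change (p * l : ℤ) ≡ n - udig (b - i) [ZMOD d] ↔ p * l + udig (b - i) ≡ n [MOD d]
  rw [← Int.natCast_modEq_iff]
  push_cast
  exact ⟨fun h => by simpa using h.add_right (udig (b - i) : ℤ),
    fun h => by simpa using h.sub_right (udig (b - i) : ℤ)⟩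

lemma varpiSlope_sub_omegaSlope (p d k b : ℕ) (udig : ℕ → ℕ) (hp : 0 < p) (hd : 0 < d)
    (hk : 0 < k) (a : ℕ) :
    varpiSlope p d k b udig a - omegaSlope p d b udig a
      = (1 / b) * ∑ i ∈ Icc 1 b, slopeDiff (affineMod p d (udig (b - i))) k d a := by
  rw [varpiSlope, omegaSlope, ← mul_add, ← mul_sub, ← mul_sub, ← sum_add_distrib,
    ← sum_sub_distrib, ← sum_sub_distrib]
  refine congrArg _ (sum_congr rfl fun i _ => ?_)
  rw [deltaIn_eq]
  generalize udig (b - i) = u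
  have hle : a ≤ p * a := Nat.le_mul_of_pos_left a hp
  have hnum : (p - 1) * a + u = p * a + u - a := by rw [Nat.sub_one_mul]; omega
  have haff : affineMod p d u (a % d) = (p * a + u) % d :=
    ((Nat.mod_modEq a d).mul_left p).add_right u
  have hfloor (x y : ℕ) : (⌊(x : ℚ) / y⌋ : ℚ) = ((x / y : ℕ) : ℚ) := by
    rw [Rat.floor_natCast_div_natCast, ← Int.natCast_div, Int.cast_natCast]
  rw [hfloor, hfloor, hfloor, hfloor, sum_indGT_sub_eq_correction _ _ _ _ _ hk (Nat.mod_lt a hd),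
    sum_indGT_sub_eq_correction _ _ _ _ _ hk (rprev_lt d a hd), hnum,
    ceil_natSub_div _ _ _ (by omega) hd, slopeDiff, mainGap, haff]
  simp only [Int.cast_add, Int.cast_sub, Int.cast_natCast, Int.cast_ite, Int.cast_one,
    Int.cast_zero]
  ring

theorem varpi_ge_omega_general (p d k b : ℕ) (udig : ℕ → ℕ)
    (hpd : Nat.gcd p d = 1) (hd : 2 ≤ d) (hk1 : 1 ≤ k) :
    ∀ m : ℕ, ∑ a ∈ Finset.range m, omegaSlope p d b udig a
      ≤ ∑ a ∈ Finset.range m, varpiSlope p d k b udig a := by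
  intro m
  have hd0 : 0 < d := by omega
  have hp : 0 < p := Nat.pos_of_ne_zero fun hp0 => by simp [hp0] at hpd; omega
  rw [← sub_nonneg, ← sum_sub_distrib]
  simp_rw [varpiSlope_sub_omegaSlope p d k b udig hp hd0 hk1, ← mul_sum]
  rw [sum_comm]
  exact mul_nonneg (by positivity) (sum_nonneg fun i _ =>
    sum_range_slopeDiff_nonneg _ k hk1 hd0 (bijOn_affineMod hpd hd0 _) m)

/-- Theorem 1.8: the twisted arithmetic polygon `p_{d,[0,k],u}` of `{d} ∪ [0,k]` lies on
or above the twisted arithmetic polygon `p_{Δ,u}` of `[0,d]`: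
`Σ_{a<m} ϖ_{d,[0,k],u}(a) ≥ Σ_{a<m} ω_{Δ,u}(a)` for every `m`. -/
theorem varpi_ge_omega (p d k b : ℕ) (udig : ℕ → ℕ) (hp : p.Prime)
    (hpd : Nat.gcd p d = 1) (hd : 2 ≤ d) (hk1 : 1 ≤ k) (hk2 : k ≤ d - 1)
    (hb : 1 ≤ b) (hudig : ∀ i, udig i ≤ p - 1) :
    ∀ m : ℕ, ∑ a ∈ Finset.range m, omegaSlope p d b udig a
      ≤ ∑ a ∈ Finset.range m, varpiSlope p d k b udig a :=
  varpi_ge_omega_general p d k b udig hpd hd hk1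

end TwistedArithmeticPolygon
end
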